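/- With the Bernoulli-sequence model, the selfish-mining cycle length L is almost surely finite, i.e. μ(L < ∞) = 1; equivalently, p + pq + pq² + ∑_{n=3}^∞ p^{n−1}·q^n·C_{n−2} = 1, where C_m = (2m)!/(m!·(m+1)!) is the m-th Catalan number. -/

import Mathlib

/-!
On `{L = ∞}` the walk `W` never returns to `1` after time `2`, so it stays `≥ 2`; in particular
more than `m` of the first `2m` blocks are `S`. Summing over such prefixes, each of probability at
most `(pq)^m` because `q ≤ p`, bounds `μ(L = ∞)` by `(4pq)^m`, which tends to `0` as `q < 1/2`.

For the series, `g = ∑ Cₙ (pq)ⁿ` satisfies `g = 1 + pq g²` by the Catalan recursion, whose roots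
are `1/p` and `1/q`. The partial sums obey the same recursion with `≤`, so they stay below the
fixed point `1/p`, which singles out `g = 1/p`. Then `∑ p^(n+2) q^(n+3) C_(n+1) = pq² (g - 1) = q³`.
-/
open MeasureTheory ENNReal
open scoped BigOperators Classical

/-- The `n`-th Catalan number `C_n = (2n)! / (n! * (n+1)!)`, as a real number. -/
noncomputable def catalanC (n : ℕ) : ℝ :=
  (Nat.factorial (2 * n) : ℝ) / ((Nat.factorial n : ℝ) * (Nat.factorial (n + 1) : ℝ))

/-- Blocks are labelled by `Bool`: `true` = `S` (selfish/attacker block),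
`false` = `H` (honest block). The walk `W k = #{i < k : X_i = S} - #{i < k : X_i = H}`. -/
def walkW (ω : ℕ → Bool) (k : ℕ) : ℤ :=
  (((Finset.range k).filter fun i => ω i = true).card : ℤ) -
    (((Finset.range k).filter fun i => ω i = false).card : ℤ)

/-- The selfish-mining cycle length `L : Ω → ℕ∞` : `L = 1` if `X_0 = H`; `L = 2` if
`X_0 = S, X_1 = H`; and if `X_0 = X_1 = S`, `L = (σ + 1) / 2` where
`σ = inf {k ≥ 2 : W k = 1}`, with `L = ∞` if no such `k` exists. -/
noncomputable def smL (ω : ℕ → Bool) : ℕ∞ :=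
  if ω 0 = false then 1
  else if ω 1 = false then 2
  else if _h : {k : ℕ | 2 ≤ k ∧ walkW ω k = 1}.Nonempty then
    (((sInf {k : ℕ | 2 ≤ k ∧ walkW ω k = 1} + 1) / 2 : ℕ) : ℕ∞)
  else ⊤

open Finset

lemma walkW_succ (ω : ℕ → Bool) (k : ℕ) :
    walkW ω (k + 1) = walkW ω k + if ω k then 1 else -1 := by
  unfold walkW
  rw [range_add_one, filter_insert, filter_insert]
  cases ω k <;> simp [card_insert_of_notMem] <;> ring

lemma walkW_eq_two_mul_card_sub (ω : ℕ → Bool) (k : ℕ) :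
    walkW ω k = 2 * #{i : Fin k | ω i = true} - k := by
  have hfin : #{i ∈ range k | ω i = true} = #{i : Fin k | ω i = true} := by
    rw [card_filter, card_filter,
      ← Fin.sum_univ_eq_sum_range (fun i => if ω i = true then 1 else 0)]
  have htot := card_filter_add_card_filter_not (s := range k) (fun i => ω i = true)
  simp only [Bool.not_eq_true, card_range] at htot
  unfold walkW
  omega

lemma two_le_walkW_of_smL_eq_top {ω : ℕ → Bool} (h : smL ω = ⊤) {k : ℕ} (hk : 2 ≤ k) :
    2 ≤ walkW ω k := by
  obtain ⟨h0, h1, hne⟩ : ω 0 = true ∧ ω 1 = true ∧ ∀ n, 2 ≤ n → walkW ω n ≠ 1 := by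
    unfold smL at h
    split_ifs at h with h0 h1 hne <;> simp_all [Set.Nonempty]
  induction k, hk using Nat.le_induction with
  | base =>
    rw [show 2 = 0 + 1 + 1 from rfl, walkW_succ, walkW_succ]
    simp [walkW, h0, h1]
  | succ n hn ih =>
    have := hne (n + 1) (by omega)
    rw [walkW_succ] at this ⊢
    split_ifs at this ⊢ <;> omega

lemma lt_card_of_smL_eq_top {ω : ℕ → Bool} (h : smL ω = ⊤) {m : ℕ} (hm : 1 ≤ m) :
    m < #{i : Fin (2 * m) | ω i = true} := by
  have := two_le_walkW_of_smL_eq_top h (k := 2 * m) (by omega)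
  rw [walkW_eq_two_mul_card_sub] at this
  omega

lemma measure_setOf_prefix_mem {α : Type*} [MeasurableSpace α] [MeasurableSingletonClass α]
    (μ : Measure (ℕ → α)) {k : ℕ} (s : Finset (Fin k → α)) :
    μ {ω | (fun i : Fin k => ω i) ∈ s} = ∑ w ∈ s, μ {ω | ∀ i : Fin k, ω i = w i} := by
  have hprefix : Measurable fun (ω : ℕ → α) (i : Fin k) => ω i :=
    measurable_pi_lambda _ fun i => measurable_pi_apply (i : ℕ)
  have hcyl (w : Fin k → α) :
      {ω : ℕ → α | ∀ i : Fin k, ω i = w i} = (fun ω (i : Fin k) => ω i) ⁻¹' {w} := by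
    ext; simp [funext_iff]
  simp_rw [hcyl]
  exact (sum_measure_preimage_singleton s fun w _ => hprefix (measurableSet_singleton w)).symm

lemma pow_mul_pow_sub_le_mul_pow {R : Type*} [CommSemiring R] [PartialOrder R] [IsOrderedRing R]
    {a b : R} (ha : 0 ≤ a) (hab : a ≤ b) {m t : ℕ} (hmt : m ≤ t) (ht : t ≤ 2 * m) :
    a ^ t * b ^ (2 * m - t) ≤ (a * b) ^ m := by
  obtain ⟨j, rfl⟩ := Nat.exists_eq_add_of_le hmt
  calc a ^ (m + j) * b ^ (2 * m - (m + j)) = a ^ m * (a ^ j * b ^ (m - j)) := by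
        rw [show 2 * m - (m + j) = m - j by omega]; ring
    _ ≤ a ^ m * (b ^ j * b ^ (m - j)) := by
        have := ha.trans hab
        gcongr
    _ = (a * b) ^ m := by rw [← pow_add, Nat.add_sub_cancel' (by omega), mul_pow]

lemma prod_ite_le_mul_pow {R : Type*} [CommSemiring R] [PartialOrder R] [IsOrderedRing R]
    {a b : R} (ha : 0 ≤ a) (hab : a ≤ b) {m : ℕ} (w : Fin (2 * m) → Bool)
    (hw : m ≤ #{i | w i = true}) :
    ∏ i, (if w i then a else b) ≤ (a * b) ^ m := by
  have hcompl := card_filter_add_card_filter_not (s := univ) (fun i => w i = true)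
  rw [card_univ, Fintype.card_fin] at hcompl
  rw [prod_ite, prod_const, prod_const,
    show #{i | ¬w i = true} = 2 * m - #{i | w i = true} by omega]
  exact pow_mul_pow_sub_le_mul_pow ha hab hw (by omega)

section Bernoulli

variable {μ : Measure (ℕ → Bool)} {a b : ℝ≥0∞}

lemma measure_setOf_lt_card_filter_le (hμ : ∀ (n : ℕ) (w : Fin n → Bool),
      μ {ω | ∀ i : Fin n, ω i = w i} = ∏ i : Fin n, if w i then a else b)
    (hab : a ≤ b) (m : ℕ) :
    μ {ω | m < #{i : Fin (2 * m) | ω i = true}} ≤ (4 * a * b) ^ m := by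
  set S : Finset (Fin (2 * m) → Bool) := {w | m < #{i | w i = true}}
  calc μ {ω | m < #{i : Fin (2 * m) | ω i = true}}
      = ∑ w ∈ S, μ {ω | ∀ i : Fin (2 * m), ω i = w i} := by
        rw [← measure_setOf_prefix_mem]; simp [S]
    _ ≤ ∑ _w ∈ S, (a * b) ^ m := by
        refine sum_le_sum fun w hw => ?_
        rw [hμ]
        exact prod_ite_le_mul_pow (by simp) hab w (mem_filter.mp hw).2.le
    _ ≤ 2 ^ (2 * m) * (a * b) ^ m := by
        rw [sum_const, nsmul_eq_mul]
        gcongr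
        exact_mod_cast (card_le_univ S).trans_eq (by simp)
    _ = (4 * a * b) ^ m := by rw [pow_mul, mul_assoc, mul_pow (4 : ℝ≥0∞)]; norm_num

lemma measure_smL_eq_top (hμ : ∀ (n : ℕ) (w : Fin n → Bool),
      μ {ω | ∀ i : Fin n, ω i = w i} = ∏ i : Fin n, if w i then a else b)
    (hab : a ≤ b) (h4ab : 4 * a * b < 1) :
    μ {ω | smL ω = ⊤} = 0 := by
  have hle : ∀ m, μ {ω | smL ω = ⊤} ≤ (4 * a * b) ^ (m + 1) := fun m =>
    (measure_mono fun _ hω => lt_card_of_smL_eq_top hω (by omega)).trans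
      (measure_setOf_lt_card_filter_le hμ hab (m + 1))
  exact nonpos_iff_eq_zero.mp <| ge_of_tendsto'
    ((ENNReal.tendsto_pow_atTop_nhds_zero_of_lt_one h4ab).comp (Filter.tendsto_add_atTop_nat 1))
    hle

end Bernoulli

lemma catalanC_eq_catalan (n : ℕ) : catalanC n = catalan n := by
  have hnat : catalan n * (n.factorial * (n + 1).factorial) = (2 * n).factorial := by
    have h := Nat.choose_mul_factorial_mul_factorial (show n ≤ 2 * n by omega)
    rw [show 2 * n - n = n by omega, ← Nat.centralBinom_eq_two_mul_choose,
      ← succ_mul_catalan_eq_centralBinom] at h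
    rw [Nat.factorial_succ, ← h]
    ring
  rw [catalanC, ← hnat]
  push_cast
  field_simp

lemma catalan_succ_mul_pow {R : Type*} [CommSemiring R] (x : R) (n : ℕ) :
    catalan (n + 1) * x ^ (n + 1) =
      x * ∑ ij ∈ antidiagonal n, (catalan ij.1 * x ^ ij.1) * (catalan ij.2 * x ^ ij.2) := by
  rw [catalan_succ', Nat.cast_sum, sum_mul, mul_sum]
  refine sum_congr rfl fun ij hij => ?_
  rw [← mem_antidiagonal.mp hij]
  push_cast
  ring

lemma sum_range_sum_antidiagonal_le_sq {f : ℕ → ℝ} (hf : ∀ n, 0 ≤ f n) (N : ℕ) :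
    ∑ n ∈ range N, ∑ ij ∈ antidiagonal n, f ij.1 * f ij.2 ≤ (∑ n ∈ range N, f n) ^ 2 := by
  rw [sq, sum_mul_sum, ← sum_product', sum_sigma']
  have hinj : Set.InjOn Sigma.snd ((range N).sigma antidiagonal : Set (Σ _ : ℕ, ℕ × ℕ)) := by
    rintro ⟨n, ij⟩ hx ⟨n', ij'⟩ hx' (rfl : ij = ij')
    simp only [coe_sigma, Set.mem_sigma_iff, mem_coe, HasAntidiagonal.mem_antidiagonal] at hx hx'
    rw [← hx.2, ← hx'.2]
  calc _ = ∑ ij ∈ ((range N).sigma antidiagonal).image Sigma.snd, f ij.1 * f ij.2 :=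
        (sum_image hinj).symm
    _ ≤ _ := by
      refine sum_le_sum_of_subset_of_nonneg ?_ fun _ _ _ => mul_nonneg (hf _) (hf _)
      intro ij hij
      simp only [mem_image, mem_sigma, mem_range, HasAntidiagonal.mem_antidiagonal] at hij
      obtain ⟨⟨n, i, j⟩, ⟨hn, hij⟩, rfl⟩ := hij
      simp only [mem_product, mem_range] at hn hij ⊢
      omega

section CatalanSeries

variable {p q : ℝ}

lemma sum_range_catalan_mul_pow_le (hq : 0 ≤ q) (hqp : q ≤ p) (hpq : p + q = 1) (N : ℕ) :
    ∑ n ∈ range N, (catalan n : ℝ) * (p * q) ^ n ≤ p⁻¹ := by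
  have hp : 0 < p := by linarith
  induction N with
  | zero => simp [hp.le]
  | succ N ih =>
    set a : ℕ → ℝ := fun n => catalan n * (p * q) ^ n
    have ha : ∀ n, 0 ≤ a n := fun n => by positivity
    have hshift : ∑ n ∈ range N, a (n + 1) ≤ p * q * (∑ n ∈ range N, a n) ^ 2 := by
      simp only [a, catalan_succ_mul_pow, ← mul_sum]
      exact mul_le_mul_of_nonneg_left (sum_range_sum_antidiagonal_le_sq ha N) (by positivity)
    calc ∑ n ∈ range (N + 1), a n = 1 + ∑ n ∈ range N, a (n + 1) := by
          rw [sum_range_succ', add_comm]; simp [a]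
      _ ≤ 1 + p * q * (p⁻¹) ^ 2 := by
          gcongr
          exact hshift.trans (by gcongr)
      _ = p⁻¹ := by field_simp; linarith

lemma hasSum_catalan_mul_pow (hq : 0 ≤ q) (hqp : q ≤ p) (hpq : p + q = 1) :
    HasSum (fun n => (catalan n : ℝ) * (p * q) ^ n) p⁻¹ := by
  have hp : 0 < p := by linarith
  set a : ℕ → ℝ := fun n => catalan n * (p * q) ^ n
  have ha : ∀ n, 0 ≤ a n := fun n => by positivity
  have hbound := sum_range_catalan_mul_pow_le hq hqp hpq
  have hsum : Summable a := summable_of_sum_range_le ha hbound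
  set g := ∑' n, a n
  have hg : g ≤ p⁻¹ := Real.tsum_le_of_sum_range_le ha hbound
  have hfun : g = 1 + p * q * g ^ 2 := by
    have hnorm : Summable fun n => ‖a n‖ := by simpa [Real.norm_of_nonneg (ha _)] using hsum
    calc g = a 0 + ∑' n, a (n + 1) := hsum.tsum_eq_zero_add
      _ = 1 + p * q * g ^ 2 := by
        rw [sq, tsum_mul_tsum_eq_tsum_sum_antidiagonal_of_summable_norm hnorm hnorm,
          ← tsum_mul_left]
        simp [a, catalan_succ_mul_pow]
  have hroots : (p * g - 1) * (q * g - 1) = 0 := by linear_combination -hfun - g * hpq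
  have hpg : p * g = 1 := by
    have hle : p * g ≤ 1 := by simpa [hp.ne'] using mul_le_mul_of_nonneg_left hg hp.le
    rcases mul_eq_zero.mp hroots with h | h
    · linarith
    · have hg0 : 0 ≤ g := tsum_nonneg ha
      nlinarith [mul_le_mul_of_nonneg_right hqp hg0]
  exact hsum.hasSum_iff.mpr (eq_inv_of_mul_eq_one_right hpg)

lemma hasSum_pow_mul_pow_mul_catalanC (hq : 0 ≤ q) (hqp : q ≤ p) (hpq : p + q = 1) :
    HasSum (fun n => p ^ (n + 2) * q ^ (n + 3) * catalanC (n + 1)) (q ^ 3) := by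
  have hp : p ≠ 0 := by linarith
  have htail := (hasSum_nat_add_iff' 1).mpr (hasSum_catalan_mul_pow hq hqp hpq)
  have hterm : (fun n => p ^ (n + 2) * q ^ (n + 3) * catalanC (n + 1)) =
      fun n => p * q ^ 2 * (catalan (n + 1) * (p * q) ^ (n + 1)) := by
    funext n
    rw [catalanC_eq_catalan]
    ring
  have hvalue : q ^ 3 = p * q ^ 2 * (p⁻¹ - ∑ i ∈ range 1, (catalan i : ℝ) * (p * q) ^ i) := by
    simp only [range_one, sum_singleton, catalan_zero, Nat.cast_one, pow_zero, mul_one]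
    field_simp
    linear_combination q ^ 2 * hpq
  rw [hterm, hvalue]
  exact htail.mul_left _

end CatalanSeries

/-- The selfish-mining cycle length is almost surely finite: `μ(L < ∞) = 1`;
equivalently `p + pq + pq² + ∑_{n ≥ 3} p^(n-1) q^n C_(n-2) = 1` (the sum over `n ≥ 3`
being written with the index shift `n ↦ n + 3`). -/
theorem smL_as_finite (q p : ℝ) (hq0 : 0 < q) (hq : q < 1 / 2) (hp : p = 1 - q)
    (μ : Measure (ℕ → Bool)) [IsProbabilityMeasure μ]
    (hμ : ∀ (n : ℕ) (w : Fin n → Bool),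
      μ {ω | ∀ i : Fin n, ω i = w i} =
        ∏ i : Fin n, (if w i then ENNReal.ofReal q else ENNReal.ofReal p)) :
    μ {ω | smL ω < ⊤} = 1 ∧
    p + p * q + p * q ^ 2 +
      ∑' n : ℕ, p ^ (n + 2) * q ^ (n + 3) * catalanC (n + 1) = 1 := by
  have hqp : q ≤ p := by linarith
  constructor
  · have h4 : 4 * ENNReal.ofReal q * ENNReal.ofReal p < 1 := by
      rw [← ENNReal.ofReal_ofNat 4, ← ofReal_mul (by norm_num), ← ofReal_mul (by positivity),
        ofReal_lt_one]
      nlinarith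
    have hnull := measure_smL_eq_top hμ (ofReal_le_ofReal hqp) h4
    rw [← prob_compl_eq_one_iff₀ (.of_null hnull)] at hnull
    simpa [lt_top_iff_ne_top, Set.compl_ofPred] using hnull
  · rw [(hasSum_pow_mul_pow_mul_catalanC hq0.le hqp (by linarith)).tsum_eq, hp]
    ring
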